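/- For every even integer n ≥ 4 with n ≡ 4 (mod 6), the helm graph H_{1,n} satisfies ζ(H_{1,n}) = (4n − 1)(n − 1)/3; this equals 3·((2n+1)/3)² − 3n, the value obtained from the balanced 3-partition of the 2n + 1 vertices into three color classes of size (2n+1)/3 each, minus the 3n edges of H_{1,n}. -/

import Mathlib

open SimpleGraph

/-- A proper vertex colouring of `G` using exactly `χ(G)` colours. -/
def IsChromaticColoring {V : Type*} (G : SimpleGraph V) (c : V → ℕ) : Prop :=
  (∀ u v, G.Adj u v → c u ≠ c v) ∧ ((Set.range c).ncard : ℕ∞) = G.chromaticNumber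

/-- The set of chromatic completion edges for a colouring `c`: unordered pairs of
distinct non-adjacent vertices with different colours. -/
def completionEdges {V : Type*} (G : SimpleGraph V) (c : V → ℕ) : Set (Sym2 V) :=
  {e | ∃ u v, e = s(u, v) ∧ u ≠ v ∧ ¬ G.Adj u v ∧ c u ≠ c v}

/-- The chromatic completion number `ζ(G)`. -/
noncomputable def zeta {V : Type*} (G : SimpleGraph V) : ℕ :=
  sSup {m | ∃ c : V → ℕ, IsChromaticColoring G c ∧ m = (completionEdges G c).ncard}

/-- The wheel graph `W_{1,n}`: the cycle `C_n` (on the `some` vertices) joined to a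
central hub vertex `none` adjacent to every rim vertex. -/
def wheelGraph (n : ℕ) : SimpleGraph (Option (Fin n)) where
  Adj u v := match u, v with
    | none, none => False
    | none, some _ => True
    | some _, none => True
    | some i, some j => (cycleGraph n).Adj i j
  symm := by
    constructor
    intro u v h
    cases u <;> cases v <;> simp_all
    exact ((cycleGraph n).adj_symm h)
  loopless := by
    constructor
    intro u h
    cases u with
    | none => exact h
    | some i => exact (cycleGraph n).ne_of_adj h rfl

/-- The helm graph `H_{1,n}`: the wheel `W_{1,n}` (on the `inl` vertices) with a pendant
vertex `inr i` attached to the rim vertex `inl (some i)` for each `i`. -/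
def helmGraph (n : ℕ) : SimpleGraph (Option (Fin n) ⊕ Fin n) where
  Adj u v := match u, v with
    | Sum.inl a, Sum.inl b => (wheelGraph n).Adj a b
    | Sum.inl a, Sum.inr j => a = some j
    | Sum.inr i, Sum.inl b => b = some i
    | Sum.inr _, Sum.inr _ => False
  symm := by
    constructor
    intro u v h
    cases u <;> cases v <;> simp_all
    exact (wheelGraph n).adj_symm h
  loopless := by
    constructor
    intro u h
    cases u with
    | inl a => exact (wheelGraph n).ne_of_adj h rfl
    | inr i => exact h

/-!
For a proper colouring `c`, the completion edges of `c` are exactly the edges of the complete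
multipartite graph `D_c` on the colour classes of `c` that are not edges of `G`, so
`ζ(G) + |E(G)| = max_c |E(D_c)|` over chromatic colourings `c`. Such a `D_c` has `χ(G)` classes,
hence is `K_{χ(G)+1}`-free, and Turán's theorem bounds its edge count by the value attained when
all classes have equal size. For `H_{1,n}` with `n ≡ 4 (mod 6)` such a balanced 3-colouring
exists: the hub gets colour 2, the rim alternates 0, 1, the first `(n + 2) / 3` pendants take the
rim colour not used by their neighbour and the others take colour 2, so that each class has
`(2n + 1) / 3` vertices.
-/

open Finset

namespace SimpleGraph

variable {V : Type*} [Fintype V]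

theorem colorable_ncard_range {α : Type*} {G : SimpleGraph V} {c : V → α}
    (hc : ∀ u v, G.Adj u v → c u ≠ c v) : G.Colorable (Set.range c).ncard := by
  classical
  have C : G.Coloring (Set.range c) :=
    Coloring.mk (Set.rangeFactorization c) fun h => by simpa [Subtype.ext_iff] using hc _ _ h
  simpa [← Nat.card_eq_fintype_card] using C.colorable

theorem CliqueFree.mul_card_edgeFinset_le {G : SimpleGraph V} [DecidableRel G.Adj] {r : ℕ}
    (hG : G.CliqueFree (r + 1)) : 2 * r * #G.edgeFinset ≤ (r - 1) * Fintype.card V ^ 2 :=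
  calc 2 * r * #G.edgeFinset
      ≤ 2 * r * #(turanGraph (Fintype.card V) r).edgeFinset := by
        rw [card_edgeFinset_turanGraph]
        exact Nat.mul_le_mul_left _ hG.card_edgeFinset_le
    _ ≤ (r - 1) * Fintype.card V ^ 2 := mul_card_edgeFinset_turanGraph_le

variable {α : Type*} (c : V → α)

theorem cliqueFree_comap_top :
    ((⊤ : SimpleGraph α).comap c).CliqueFree ((Set.range c).ncard + 1) :=
  (colorable_ncard_range fun _ _ h => h).cliqueFree (Nat.lt_succ_self _)

variable [DecidableEq α]

theorem degree_comap_top (v : V) :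
    ((⊤ : SimpleGraph α).comap c).degree v = Fintype.card V - #{w | c w = c v} := by
  rw [← card_neighborFinset_eq_degree, neighborFinset_eq_filter,
    ← card_univ, ← card_filter_add_card_filter_not (s := univ) (fun w => c w = c v)]
  simp [eq_comm]

theorem two_mul_card_edgeFinset_comap_top {K : ℕ} (hK : ∀ v, #{w | c w = c v} = K) :
    2 * #((⊤ : SimpleGraph α).comap c).edgeFinset = Fintype.card V * (Fintype.card V - K) := by
  simp [← sum_degrees_eq_twice_card_edges, degree_comap_top, hK]

end SimpleGraph

theorem card_eq_ncard_range_mul {V α : Type*} [Fintype V] [DecidableEq α] (c : V → α) {K : ℕ}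
    (hK : ∀ v, #{w | c w = c v} = K) : Fintype.card V = (Set.range c).ncard * K := by
  rw [← card_univ, card_eq_sum_card_image c univ, sum_const_nat (m := K), ← Set.ncard_coe_finset,
    coe_image, coe_univ, Set.image_univ]
  simp only [mem_image, mem_univ, true_and, forall_exists_index]
  rintro _ v rfl
  exact hK v

theorem completionEdges_eq_edgeSet_sdiff {V : Type*} (G : SimpleGraph V) (c : V → ℕ) :
    completionEdges G c = ((⊤ : SimpleGraph ℕ).comap c \ G).edgeSet := by
  ext e
  induction e with
  | _ u v =>
    simp only [completionEdges, Set.mem_ofPred_eq, mem_edgeSet, sdiff_adj, comap_adj, top_adj]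
    constructor
    · rintro ⟨a, b, hab, -, hnadj, hc⟩
      rcases Sym2.eq_iff.mp hab with ⟨rfl, rfl⟩ | ⟨rfl, rfl⟩
      · exact ⟨hc, hnadj⟩
      · exact ⟨hc.symm, fun h => hnadj h.symm⟩
    · rintro ⟨hc, hnadj⟩
      exact ⟨u, v, rfl, fun h => hc (congrArg c h), hnadj, hc⟩

section Completion

variable {V : Type*} [Fintype V]

theorem ncard_completionEdges_add_card_edgeFinset [DecidableEq V] {G : SimpleGraph V}
    [DecidableRel G.Adj] {c : V → ℕ} (hc : G ≤ (⊤ : SimpleGraph ℕ).comap c) :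
    (completionEdges G c).ncard + #G.edgeFinset = #((⊤ : SimpleGraph ℕ).comap c).edgeFinset := by
  have hsub := edgeFinset_subset_edgeFinset.mpr hc
  rw [completionEdges_eq_edgeSet_sdiff, ← coe_edgeFinset, Set.ncard_coe_finset, edgeFinset_sdiff,
    card_sdiff_of_subset hsub, Nat.sub_add_cancel (card_le_card hsub)]

theorem zeta_eq_ncard_completionEdges [Nonempty V] {G : SimpleGraph V} {c : V → ℕ} {K : ℕ}
    (hc : IsChromaticColoring G c) (hK : ∀ v, #{w | c w = c v} = K) :
    zeta G = (completionEdges G c).ncard := by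
  classical
  refine IsGreatest.csSup_eq ⟨⟨c, hc, rfl⟩, ?_⟩
  rintro _ ⟨c', hc', rfl⟩
  set r := (Set.range c).ncard
  have hr : (Set.range c').ncard = r := by exact_mod_cast hc'.2.trans hc.2.symm
  have hr0 : 0 < r := (Set.ncard_pos (Set.toFinite _)).mpr (Set.range_nonempty c)
  have hE := ncard_completionEdges_add_card_edgeFinset hc.1
  have hE' := ncard_completionEdges_add_card_edgeFinset hc'.1
  suffices 2 * r * #((⊤ : SimpleGraph ℕ).comap c').edgeFinset ≤
      2 * r * #((⊤ : SimpleGraph ℕ).comap c).edgeFinset by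
    have := Nat.le_of_mul_le_mul_left this (by positivity)
    omega
  calc 2 * r * #((⊤ : SimpleGraph ℕ).comap c').edgeFinset
      ≤ (r - 1) * Fintype.card V ^ 2 := hr ▸ (cliqueFree_comap_top c').mul_card_edgeFinset_le
    _ = r * (2 * #((⊤ : SimpleGraph ℕ).comap c).edgeFinset) := by
        rw [two_mul_card_edgeFinset_comap_top c hK, card_eq_ncard_range_mul c hK, ← Nat.sub_one_mul]
        ring
    _ = 2 * r * #((⊤ : SimpleGraph ℕ).comap c).edgeFinset := by ring

theorem two_mul_zeta_add_card_edgeFinset [Nonempty V] [DecidableEq V] {G : SimpleGraph V}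
    [DecidableRel G.Adj] {c : V → ℕ} {K : ℕ} (hc : IsChromaticColoring G c)
    (hK : ∀ v, #{w | c w = c v} = K) :
    2 * (zeta G + #G.edgeFinset) = Fintype.card V * (Fintype.card V - K) := by
  rw [zeta_eq_ncard_completionEdges hc hK, ncard_completionEdges_add_card_edgeFinset hc.1,
    two_mul_card_edgeFinset_comap_top c hK]

end Completion

theorem card_filter_fin_eq_count (p : ℕ → Prop) [DecidablePred p] (n : ℕ) :
    #{i : Fin n | p i} = Nat.count p n := by
  rw [Nat.count_eq_card_filter_range, card_filter, card_filter,
    Fin.sum_univ_eq_sum_range (fun i => if p i then 1 else 0)]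

theorem count_mod_two_eq (k N : ℕ) :
    Nat.count (· % 2 = k) N = if k < 2 then (N + 1 - k) / 2 else 0 := by
  induction N with
  | zero => rw [Nat.count_zero]; split_ifs <;> omega
  | succ N ih => rw [Nat.count_succ, ih]; split_ifs <;> omega

theorem count_one_sub_mod_two_eq (k N : ℕ) :
    Nat.count (1 - · % 2 = k) N = if k < 2 then (N + k) / 2 else 0 := by
  induction N with
  | zero => rw [Nat.count_zero]; split_ifs <;> omega
  | succ N ih => rw [Nat.count_succ, ih]; split_ifs <;> omega

theorem count_ite_lt_eq {s N : ℕ} (hs : s ≤ N) (f : ℕ → ℕ) (a k : ℕ) :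
    Nat.count (fun i => (if i < s then f i else a) = k) N
      = Nat.count (f · = k) s + if a = k then N - s else 0 := by
  obtain ⟨d, rfl⟩ := Nat.exists_eq_add_of_le hs
  rw [Nat.count_add]
  congr 1
  · simp only [Nat.count_eq_card_filter_range]
    exact congrArg card (filter_congr fun i hi => by rw [if_pos (mem_range.mp hi)])
  · split_ifs with ha <;> simp [ha]

theorem cycleGraph_adj_mod_two {n : ℕ} (hn : Even n) {i j : Fin n} (h : (cycleGraph n).Adj i j) :
    (i : ℕ) % 2 ≠ j % 2 := by
  obtain ⟨r, rfl⟩ := hn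
  have key : ∀ a b : Fin (r + r), (a - b : Fin (r + r)).val = 1 → (a : ℕ) % 2 ≠ b % 2 := by
    intro a b hab
    rcases le_or_gt b a with hba | hab'
    · rw [Fin.coe_sub_iff_le.mpr hba] at hab
      omega
    · rw [Fin.coe_sub_iff_lt.mpr hab'] at hab
      omega
  rcases cycleGraph_adj'.mp h with h | h
  · exact key i j h
  · exact (key j i h).symm

instance (n : ℕ) : DecidableRel (wheelGraph n).Adj
  | none, none => inferInstanceAs (Decidable False)
  | none, some _ => inferInstanceAs (Decidable True)
  | some _, none => inferInstanceAs (Decidable True)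
  | some i, some j => inferInstanceAs (Decidable ((cycleGraph n).Adj i j))

instance (n : ℕ) : DecidableRel (helmGraph n).Adj
  | .inl a, .inl b => inferInstanceAs (Decidable ((wheelGraph n).Adj a b))
  | .inl a, .inr j => inferInstanceAs (Decidable (a = some j))
  | .inr i, .inl b => inferInstanceAs (Decidable (b = some i))
  | .inr _, .inr _ => inferInstanceAs (Decidable False)

section Helm

variable {n : ℕ}

@[simp] theorem helmGraph_adj_inl_inl {a b : Option (Fin n)} :
    (helmGraph n).Adj (.inl a) (.inl b) ↔ (wheelGraph n).Adj a b := Iff.rfl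
@[simp] theorem helmGraph_adj_inl_inr {a : Option (Fin n)} {j : Fin n} :
    (helmGraph n).Adj (.inl a) (.inr j) ↔ a = some j := Iff.rfl
@[simp] theorem helmGraph_adj_inr_inl {a : Option (Fin n)} {j : Fin n} :
    (helmGraph n).Adj (.inr j) (.inl a) ↔ a = some j := Iff.rfl
@[simp] theorem helmGraph_not_adj_inr_inr {i j : Fin n} : ¬ (helmGraph n).Adj (.inr i) (.inr j) :=
  id
@[simp] theorem wheelGraph_adj_none_some {i : Fin n} : (wheelGraph n).Adj none (some i) := trivial
@[simp] theorem wheelGraph_adj_some_none {i : Fin n} : (wheelGraph n).Adj (some i) none := trivial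
@[simp] theorem wheelGraph_adj_some_some {i j : Fin n} :
    (wheelGraph n).Adj (some i) (some j) ↔ (cycleGraph n).Adj i j := Iff.rfl

theorem helmGraph_degree_hub : (helmGraph n).degree (.inl none) = n := by
  rw [← card_neighborFinset_eq_degree, neighborFinset_eq_filter, card_filter,
    Fintype.sum_sum_type, Fintype.sum_option]
  simp

theorem helmGraph_degree_pendant (i : Fin n) : (helmGraph n).degree (.inr i) = 1 := by
  rw [← card_neighborFinset_eq_degree, neighborFinset_eq_filter, card_filter,
    Fintype.sum_sum_type, Fintype.sum_option]
  simp

theorem helmGraph_degree_rim (hn : 3 ≤ n) (i : Fin n) :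
    (helmGraph n).degree (.inl (some i)) = 4 := by
  obtain ⟨m, rfl⟩ : ∃ m, n = m + 3 := ⟨n - 3, by omega⟩
  have := cycleGraph_degree_three_le (v := i)
  rw [← card_neighborFinset_eq_degree, neighborFinset_eq_filter, card_filter] at this ⊢
  rw [Fintype.sum_sum_type, Fintype.sum_option]
  simp [this]

theorem card_edgeFinset_helmGraph (hn : 3 ≤ n) : #(helmGraph n).edgeFinset = 3 * n := by
  have := (helmGraph n).sum_degrees_eq_twice_card_edges
  simp only [Fintype.sum_sum_type, Fintype.sum_option, helmGraph_degree_hub,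
    helmGraph_degree_rim hn, helmGraph_degree_pendant, sum_const, card_univ, Fintype.card_fin,
    smul_eq_mul] at this
  omega

variable (n) in
def helmColoring : Option (Fin n) ⊕ Fin n → ℕ
  | .inl none => 2
  | .inl (some i) => i % 2
  | .inr i => if (i : ℕ) < (n + 2) / 3 then 1 - i % 2 else 2

theorem helmColoring_proper (hn : Even n) :
    ∀ u v, (helmGraph n).Adj u v → helmColoring n u ≠ helmColoring n v := by
  rintro ((_ | i) | i) ((_ | j) | j) h <;>
    simp only [helmGraph_adj_inl_inl, helmGraph_adj_inl_inr, helmGraph_adj_inr_inl,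
      helmGraph_not_adj_inr_inr, wheelGraph_adj_none_some, wheelGraph_adj_some_none,
      wheelGraph_adj_some_some, Option.some.injEq, reduceCtorEq, SimpleGraph.irrefl, helmColoring,
      ne_eq] at h ⊢
  all_goals first | exact cycleGraph_adj_mod_two hn h | (subst h; split_ifs <;> omega) | omega

theorem helmColoring_lt_three (v : Option (Fin n) ⊕ Fin n) : helmColoring n v < 3 := by
  rcases v with (_ | i) | i <;> simp only [helmColoring]
  all_goals (try split_ifs) <;> omega

theorem range_helmColoring (hn : 2 ≤ n) : Set.range (helmColoring n) = {0, 1, 2} := by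
  obtain ⟨m, rfl⟩ : ∃ m, n = m + 2 := ⟨n - 2, by omega⟩
  apply Set.Subset.antisymm
  · rintro _ ⟨v, rfl⟩
    have := helmColoring_lt_three v
    simp only [Set.mem_insert_iff, Set.mem_singleton_iff]
    omega
  · rintro k (rfl | rfl | rfl)
    exacts [⟨.inl (some 0), by simp [helmColoring]⟩, ⟨.inl (some 1), by simp [helmColoring]⟩,
      ⟨.inl none, rfl⟩]

theorem ncard_range_helmColoring (hn : 2 ≤ n) : (Set.range (helmColoring n)).ncard = 3 := by
  simp [range_helmColoring hn]

theorem helmGraph_chromaticNumber (h3 : 3 ≤ n) (hn : Even n) :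
    (helmGraph n).chromaticNumber = 3 := by
  apply le_antisymm
  · have := colorable_ncard_range (helmColoring_proper hn)
    rw [ncard_range_helmColoring (by omega)] at this
    exact_mod_cast this.chromaticNumber_le
  · obtain ⟨m, rfl⟩ : ∃ m, n = m + 3 := ⟨n - 3, by omega⟩
    refine le_chromaticNumber_of_pairwise_adj (by simp)
      ![.inl none, .inl (some 0), .inl (some 1)] ?_
    have h01 : (cycleGraph (m + 3)).Adj 0 1 := by simp [cycleGraph_adj]
    intro i j hij
    fin_cases i <;> fin_cases j <;> simp_all [h01.symm]

theorem isChromaticColoring_helmColoring (h3 : 3 ≤ n) (hn : Even n) :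
    IsChromaticColoring (helmGraph n) (helmColoring n) :=
  ⟨helmColoring_proper hn, by
    rw [helmGraph_chromaticNumber h3 hn, ncard_range_helmColoring (by omega)]
    rfl⟩

theorem card_helmColoring_fiber (hmod : n % 6 = 4) {k : ℕ} (hk : k < 3) :
    #{v | helmColoring n v = k} = (2 * n + 1) / 3 := by
  have hrim : #{i : Fin n | helmColoring n (.inl (some i)) = k} = Nat.count (· % 2 = k) n :=
    card_filter_fin_eq_count (· % 2 = k) n
  have hpendant : #{i : Fin n | helmColoring n (.inr i) = k}
      = Nat.count (fun i => (if i < (n + 2) / 3 then 1 - i % 2 else 2) = k) n :=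
    card_filter_fin_eq_count (fun i => (if i < (n + 2) / 3 then 1 - i % 2 else 2) = k) n
  rw [card_filter, Fintype.sum_sum_type, Fintype.sum_option, ← card_filter, ← card_filter, hrim,
    hpendant, count_ite_lt_eq (by omega), count_one_sub_mod_two_eq, count_mod_two_eq]
  interval_cases k <;> simp only [helmColoring, Nat.reduceLT, Nat.reduceEqDiff, reduceIte] <;> omega

end Helm

theorem zeta_helm_four_mod_six_general (n : ℕ) (hmod : n % 6 = 4) :
    zeta (helmGraph n) = (4 * n - 1) * (n - 1) / 3 ∧
    zeta (helmGraph n) = 3 * ((2 * n + 1) / 3) ^ 2 - 3 * n := by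
  have h := two_mul_zeta_add_card_edgeFinset
    (isChromaticColoring_helmColoring (n := n) (by omega) (by rw [Nat.even_iff]; omega))
    fun v => card_helmColoring_fiber hmod (helmColoring_lt_three v)
  rw [card_edgeFinset_helmGraph (by omega), Fintype.card_sum, Fintype.card_option,
    Fintype.card_fin] at h
  obtain ⟨t, rfl⟩ : ∃ t, n = 6 * t + 4 := ⟨n / 6, by omega⟩
  have hK : (2 * (6 * t + 4) + 1) / 3 = 4 * t + 3 := by omega
  rw [hK, show 6 * t + 4 + 1 + (6 * t + 4) - (4 * t + 3) = 8 * t + 6 by omega] at h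
  have hζ : zeta (helmGraph (6 * t + 4)) = 48 * t ^ 2 + 54 * t + 15 := by nlinarith
  rw [hζ, hK, show 4 * (6 * t + 4) - 1 = 24 * t + 15 by omega,
    show 6 * t + 4 - 1 = 6 * t + 3 by omega]
  constructor
  · rw [show (24 * t + 15) * (6 * t + 3) = 3 * (48 * t ^ 2 + 54 * t + 15) by ring,
      Nat.mul_div_cancel_left _ (by norm_num)]
  · exact Nat.eq_sub_of_add_eq (by ring)

/-- For even `n ≥ 4` with `n ≡ 4 (mod 6)`, `ζ(H_{1,n}) = (4n-1)(n-1)/3`, which equals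
`3((2n+1)/3)² - 3n`, the value from the balanced 3-partition of the `2n+1` vertices. -/
theorem zeta_helm_four_mod_six (n : ℕ) (hn : 4 ≤ n) (hmod : n % 6 = 4) :
    zeta (helmGraph n) = (4 * n - 1) * (n - 1) / 3 ∧
    zeta (helmGraph n) = 3 * ((2 * n + 1) / 3) ^ 2 - 3 * n :=
  zeta_helm_four_mod_six_general n hmod
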